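/- arXiv:1703.07807 — 3 statements merged into one kernel-verified Lean document; each statement's English description precedes it below -/
import Mathlib

section
/- Let s1 ≤ s2 ≤ ... ≤ s_{2k} be nonnegative reals with k ≥ 2. For any partition of {1,...,2k} into two sets of size k, let the value of the partition be the sum over the two groups of the minimum product s_i * s_j over pairs i ≠ j in the group. Then the homophilous partition {1,...,k}, {k+1,...,2k} maximizes this value; in particular s1*s2 + s_{k+1}*s_{k+2} is the maximum value. -/
/-!
Say `0 ∈ A`. Among the first `k + 2` indices each group holds at least two, since the other group
holds at most `k`; two distinct indices below `k + 2` have product at most `s k * s (k + 1)`.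
If also `1 ∈ A`, the bound follows from the pair `{0, 1}` in `A` and any such pair in `B`. Otherwise
pick `t ≠ 0` in `A` and `z ≠ 1` in `B` below `k + 2`; the pairs `{0, t}` and `{1, z}` give
`s 0 * s t + s 1 * s z`, which by rearrangement is at most `s 0 * s 1 + s t * s z`.
-/

/-- The minimum pairwise product `s i * s j` over ordered pairs of distinct
elements of a group `G`. -/
noncomputable def minPairVal {n : ℕ} (s : Fin n → ℝ) (G : Finset (Fin n)) : ℝ :=
  sInf ((fun p : Fin n × Fin n => s p.1 * s p.2) '' (G.offDiag : Set (Fin n × Fin n)))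

open Finset

lemma minPairVal_le {n : ℕ} (s : Fin n → ℝ) {G : Finset (Fin n)} {i j : Fin n}
    (hi : i ∈ G) (hj : j ∈ G) (hij : i ≠ j) : minPairVal s G ≤ s i * s j :=
  csInf_le (G.offDiag.finite_toSet.image _).bddBelow ⟨(i, j), by simp [hi, hj, hij], rfl⟩

lemma minPairVal_eq_of_forall_le {n : ℕ} (s : Fin n → ℝ) {G : Finset (Fin n)} {i₀ j₀ : Fin n}
    (hi₀ : i₀ ∈ G) (hj₀ : j₀ ∈ G) (hij₀ : i₀ ≠ j₀)
    (h : ∀ i ∈ G, ∀ j ∈ G, i ≠ j → s i₀ * s j₀ ≤ s i * s j) :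
    minPairVal s G = s i₀ * s j₀ := by
  refine le_antisymm (minPairVal_le s hi₀ hj₀ hij₀) (le_csInf ⟨_, (i₀, j₀), ?_, rfl⟩ ?_)
  · simp [hi₀, hj₀, hij₀]
  · rintro _ ⟨⟨i, j⟩, hp, rfl⟩
    simp only [coe_offDiag, Set.mem_offDiag, mem_coe] at hp
    exact h i hp.1 j hp.2.1 hp.2.2

namespace Monotone

variable {n m : ℕ} {s : Fin n → ℝ}

lemma mul_le_of_ne_of_lt_add_two (hmono : Monotone s) (hnn : ∀ i, 0 ≤ s i) (hm : m + 1 < n)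
    {i j : Fin n} (hij : i ≠ j) (hi : i.val < m + 2) (hj : j.val < m + 2) :
    s i * s j ≤ s ⟨m, by omega⟩ * s ⟨m + 1, hm⟩ := by
  wlog hlt : i < j generalizing i j
  · rw [mul_comm]
    exact this hij.symm hj hi (lt_of_le_of_ne (not_lt.mp hlt) hij.symm)
  rw [Fin.lt_def] at hlt
  exact mul_le_mul (hmono (Fin.le_def.mpr (by simp; omega)))
    (hmono (Fin.le_def.mpr (by simp; omega))) (hnn _) (hnn _)

lemma le_mul_of_ne_of_le (hmono : Monotone s) (hnn : ∀ i, 0 ≤ s i) (hm : m + 1 < n)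
    {i j : Fin n} (hij : i ≠ j) (hi : m ≤ i.val) (hj : m ≤ j.val) :
    s ⟨m, by omega⟩ * s ⟨m + 1, hm⟩ ≤ s i * s j := by
  wlog hlt : i < j generalizing i j
  · rw [mul_comm (s i)]
    exact this hij.symm hj hi (lt_of_le_of_ne (not_lt.mp hlt) hij.symm)
  rw [Fin.lt_def] at hlt
  exact mul_le_mul (hmono (Fin.le_def.mpr (by simp; omega)))
    (hmono (Fin.le_def.mpr (by simp; omega))) (hnn _) (hnn _)

end Monotone

lemma two_le_card_inter_of_subset_union {α : Type*} [DecidableEq α] {T A B : Finset α} {m : ℕ}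
    (hT : T.card = m + 2) (hB : B.card ≤ m) (hcover : T ⊆ A ∪ B) : 2 ≤ (T ∩ A).card := by
  have hsub : T ⊆ T ∩ A ∪ B := fun x hx => by
    rcases mem_union.mp (hcover hx) with h | h
    · exact mem_union_left _ (mem_inter.mpr ⟨hx, h⟩)
    · exact mem_union_right _ h
  have := (card_le_card hsub).trans (card_union_le _ _)
  omega

section Partition

variable {n m : ℕ} {s : Fin n → ℝ}

lemma minPairVal_add_le_of_zero_mem (hmono : Monotone s) (hnn : ∀ i, 0 ≤ s i) (hm : m + 1 < n)
    {A B : Finset (Fin n)} (hA : A.card ≤ m) (hB : B.card ≤ m) (hdisj : Disjoint A B)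
    (hcover : A ∪ B = univ) (h0 : ⟨0, by omega⟩ ∈ A) :
    minPairVal s A + minPairVal s B ≤
      s ⟨0, by omega⟩ * s ⟨1, by omega⟩ + s ⟨m, by omega⟩ * s ⟨m + 1, hm⟩ := by
  set T : Finset (Fin n) := {i | i.val < m + 2}
  have hT : T.card = m + 2 := by rw [Fin.card_filter_val_lt]; omega
  have hAT : 2 ≤ (T ∩ A).card := two_le_card_inter_of_subset_union hT hB (hcover ▸ subset_univ T)
  have hBT : 2 ≤ (T ∩ B).card :=
    two_le_card_inter_of_subset_union hT hA (union_comm A B ▸ hcover ▸ subset_univ T)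
  have memT (i : Fin n) : i ∈ T ↔ i.val < m + 2 := by simp [T]
  by_cases h1 : ⟨1, by omega⟩ ∈ A
  · obtain ⟨y, hy, z, hz, hyz⟩ := one_lt_card.mp hBT
    rw [mem_inter, memT] at hy hz
    calc minPairVal s A + minPairVal s B ≤ s ⟨0, _⟩ * s ⟨1, _⟩ + s y * s z :=
          add_le_add (minPairVal_le s h0 h1 (by simp)) (minPairVal_le s hy.2 hz.2 hyz)
      _ ≤ _ := by grw [hmono.mul_le_of_ne_of_lt_add_two hnn hm hyz hy.1 hz.1]
  · have h1B : ⟨1, by omega⟩ ∈ B := (mem_union.mp (hcover ▸ mem_univ _)).resolve_left h1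
    obtain ⟨t, ht, ht0⟩ := exists_mem_ne hAT ⟨0, by omega⟩
    obtain ⟨z, hz, hz1⟩ := exists_mem_ne hBT ⟨1, by omega⟩
    rw [mem_inter, memT] at ht hz
    have htz : t ≠ z := fun h => disjoint_left.mp hdisj ht.2 (h ▸ hz.2)
    have h1t : s ⟨1, by omega⟩ ≤ s t := 
      hmono (Fin.le_def.mpr (Nat.one_le_iff_ne_zero.mpr (Fin.val_ne_of_ne ht0)))
    have h0z : s ⟨0, by omega⟩ ≤ s z := hmono (Fin.le_def.mpr (Nat.zero_le _))
    calc minPairVal s A + minPairVal s B ≤ s ⟨0, _⟩ * s t + s ⟨1, _⟩ * s z :=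
          add_le_add (minPairVal_le s h0 ht.2 ht0.symm) (minPairVal_le s h1B hz.2 hz1.symm)
      _ ≤ s ⟨0, _⟩ * s ⟨1, _⟩ + s t * s z := by
          linarith [mul_add_mul_le_mul_add_mul h1t h0z]
      _ ≤ _ := by grw [hmono.mul_le_of_ne_of_lt_add_two hnn hm htz ht.1 hz.1]

lemma minPairVal_filter_val_lt (hmono : Monotone s) (hnn : ∀ i, 0 ≤ s i) (hn : 1 < n)
    (hm : 1 < m) :
    minPairVal s {j | j.val < m} = s ⟨0, by omega⟩ * s ⟨1, hn⟩ :=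
  minPairVal_eq_of_forall_le s (by simp; omega) (by simpa) (by simp)
    fun _ _ _ _ hij => hmono.le_mul_of_ne_of_le hnn hn hij (Nat.zero_le _) (Nat.zero_le _)

lemma minPairVal_filter_le_val (hmono : Monotone s) (hnn : ∀ i, 0 ≤ s i) (hm : m + 1 < n) :
    minPairVal s {j | m ≤ j.val} = s ⟨m, by omega⟩ * s ⟨m + 1, hm⟩ :=
  minPairVal_eq_of_forall_le s (by simp) (by simp) (by simp)
    fun _ hi _ hj hij => hmono.le_mul_of_ne_of_le hnn hm hij (by simpa using hi) (by simpa using hj)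

end Partition

theorem homophilous_optimal_AoM_two_groups (k : ℕ) (hk : 2 ≤ k)
    (s : Fin (2 * k) → ℝ) (hnn : ∀ i, 0 ≤ s i) (hmono : Monotone s)
    (A B : Finset (Fin (2 * k))) (hA : A.card = k) (hB : B.card = k)
    (hdisj : Disjoint A B) (hcover : A ∪ B = Finset.univ) :
    minPairVal s A + minPairVal s B ≤
      s ⟨0, by omega⟩ * s ⟨1, by omega⟩ + s ⟨k, by omega⟩ * s ⟨k + 1, by omega⟩ ∧
    minPairVal s (Finset.univ.filter fun j : Fin (2 * k) => j.val < k) +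
        minPairVal s (Finset.univ.filter fun j : Fin (2 * k) => k ≤ j.val) =
      s ⟨0, by omega⟩ * s ⟨1, by omega⟩ + s ⟨k, by omega⟩ * s ⟨k + 1, by omega⟩ := by
  have hk1 : k + 1 < 2 * k := by omega
  constructor
  · rcases mem_union.mp (hcover ▸ mem_univ (⟨0, by omega⟩ : Fin (2 * k))) with h0 | h0
    · exact minPairVal_add_le_of_zero_mem hmono hnn hk1 hA.le hB.le hdisj hcover h0
    · rw [add_comm]
      exact minPairVal_add_le_of_zero_mem hmono hnn hk1 hB.le hA.le hdisj.symm
        (union_comm A B ▸ hcover) h0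
  · rw [minPairVal_filter_val_lt hmono hnn (by omega) (by omega),
      minPairVal_filter_le_val hmono hnn hk1]
end

section
/- Let s1 ≥ s2 ≥ ... ≥ sn > 0 be scores with n = m*k, and consider partitions of {1,...,n} into m groups of size k each. The maximum over all such partitions of ∑ over groups of (sum of scores in the group)^2 is attained by the homophilous partition, where group i consists of indices {(i-1)k+1, ..., ik}. -/
/-!
Order the group sums `G₁ ≥ ⋯ ≥ G_m` of an arbitrary partition decreasingly and let `H_i` be the
group sums of the homophilous partition. The `t` largest groups together hold `t k` indices, so
their total score is at most that of the `t k` best indices, which is `H₁ + ⋯ + H_t`; the totals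
agree. Hence `H` majorizes `G`, and Karamata's inequality for `x ↦ x²`, obtained by Abel summation
of `∑ (H_i + G_i) (H_i - G_i)`, gives `∑ G_i² ≤ ∑ H_i²`.
-/

open Finset Function

namespace Finset

variable {ι M : Type*} [AddCommMonoid M] [LinearOrder M] [IsOrderedAddMonoid M]

theorem sum_le_sum_of_card_eq_of_forall_le {f : ι → M} {A B : Finset ι} (hcard : #B = #A)
    (h : ∀ a ∈ A, ∀ b ∈ B, f b ≤ f a) : ∑ b ∈ B, f b ≤ ∑ a ∈ A, f a := by
  obtain rfl | hA := A.eq_empty_or_nonempty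
  · simp_all
  obtain ⟨a₀, ha₀, hmin⟩ := A.exists_min_image f hA
  calc ∑ b ∈ B, f b ≤ #B • f a₀ := sum_le_card_nsmul _ _ _ fun b hb => h a₀ ha₀ b hb
    _ = #A • f a₀ := by rw [hcard]
    _ ≤ ∑ a ∈ A, f a := card_nsmul_le_sum _ _ _ hmin

end Finset

theorem Antitone.sum_le_sum_of_isLowerSet {α M : Type*} [LinearOrder α] [AddCommMonoid M]
    [LinearOrder M] [IsOrderedAddMonoid M] {f : α → M} (hf : Antitone f) {A B : Finset α}
    (hcard : #B = #A) (hA : IsLowerSet (A : Set α)) : ∑ b ∈ B, f b ≤ ∑ a ∈ A, f a := by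
  rw [← sum_inter_add_sum_sdiff B A, ← sum_inter_add_sum_sdiff A B, inter_comm]
  gcongr _ + ?_
  refine sum_le_sum_of_card_eq_of_forall_le (card_sdiff_comm hcard) fun a ha b hb => ?_
  rw [mem_sdiff] at ha hb
  exact hf (le_of_not_gt fun hba => hb.2 (hA hba.le ha.1))

section Majorization

variable {R : Type*} [CommRing R] [LinearOrder R] [IsStrictOrderedRing R]

theorem Fin.mul_sum_le_sum_mul_of_antitone {m : ℕ} {c d : Fin (m + 1) → R} (hc : Antitone c)
    (hd : ∀ i, 0 ≤ ∑ j ∈ Iic i, d j) : c (last m) * ∑ j, d j ≤ ∑ j, c j * d j := by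
  induction m with
  | zero => simp
  | succ m ih =>
    have hd' : ∀ i, 0 ≤ ∑ j ∈ Iic i, d (castSucc j) := fun i => by
      simpa [← map_castSuccEmb_Iic] using hd (castSucc i)
    have hpre : 0 ≤ ∑ j, d (castSucc j) := by simpa [← top_eq_last] using hd' (last m)
    have hlast : c (last (m + 1)) ≤ c (castSucc (last m)) := hc (le_last _)
    rw [sum_univ_castSucc, sum_univ_castSucc (fun j => c j * d j), mul_add]
    gcongr ?_ + _
    calc c (last (m + 1)) * ∑ j, d (castSucc j) ≤ c (castSucc (last m)) * ∑ j, d (castSucc j) :=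
          mul_le_mul_of_nonneg_right hlast hpre
      _ ≤ _ := ih (hc.comp_monotone strictMono_castSucc.monotone) hd'

theorem Fin.sum_sq_le_sum_sq_of_majorized {m : ℕ} {g h : Fin m → R} (hg : Antitone g)
    (hh : Antitone h) (hpre : ∀ i, ∑ j ∈ Iic i, g j ≤ ∑ j ∈ Iic i, h j)
    (htot : ∑ i, g i = ∑ i, h i) : ∑ i, g i ^ 2 ≤ ∑ i, h i ^ 2 := by
  cases m with
  | zero => simp
  | succ m =>
    have key := mul_sum_le_sum_mul_of_antitone (c := h + g) (d := h - g) (hh.add hg)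
      fun i => by simpa [sum_sub_distrib] using hpre i
    have hdiff : ∑ j, (h - g) j = 0 := by simp [sum_sub_distrib, htot]
    have hsq : ∑ j, (h + g) j * (h - g) j = ∑ j, h j ^ 2 - ∑ j, g j ^ 2 := by
      rw [← sum_sub_distrib]; congr 1; ext j; simp only [Pi.add_apply, Pi.sub_apply]; ring
    rw [hdiff, mul_zero, hsq] at key
    exact sub_nonneg.mp key

end Majorization

theorem pairwise_disjoint_of_forall_lt {ι α : Type*} [LinearOrder ι] [Preorder α]
    {Q : ι → Finset α} (hQ : ∀ i j, i < j → ∀ a ∈ Q i, ∀ b ∈ Q j, a < b) :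
    Pairwise (Disjoint on Q) := by
  intro i j hij
  rcases hij.lt_or_gt with h | h
  · exact disjoint_left.2 fun a hi hj => (hQ i j h a hi a hj).false
  · exact disjoint_right.2 fun a hj hi => (hQ j i h a hj a hi).false

theorem sum_sum_eq_sum_of_biUnion_eq_univ {ι α M : Type*} [Fintype ι] [Fintype α] [DecidableEq α]
    [AddCommMonoid M] {s : α → M} {P : ι → Finset α} (hdisj : Pairwise (Disjoint on P))
    (hcover : univ.biUnion P = univ) : ∑ i, ∑ a ∈ P i, s a = ∑ a, s a := by
  rw [← sum_biUnion (hdisj.set_pairwise _), hcover]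

section Partition

variable {ι α M : Type*} [LinearOrder ι] [LinearOrder α] [AddCommMonoid M] [LinearOrder M]
  [IsOrderedAddMonoid M] {k : ℕ} {s : α → M} {P Q : ι → Finset α}

theorem Antitone.antitone_sum_of_forall_lt (hs : Antitone s) (hQcard : ∀ i, #(Q i) = k)
    (hQ : ∀ i j, i < j → ∀ a ∈ Q i, ∀ b ∈ Q j, a < b) : Antitone fun i => ∑ a ∈ Q i, s a :=
  antitone_iff_forall_lt.2 fun i j hij =>
    sum_le_sum_of_card_eq_of_forall_le (by rw [hQcard, hQcard]) fun a ha b hb =>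
      hs (hQ i j hij a ha b hb).le

theorem Antitone.sum_sum_le_sum_sum_Iic [Fintype ι] [Fintype α] [LocallyFiniteOrderBot ι]
    (hs : Antitone s) (hPcard : ∀ i, #(P i) = k) (hPdisj : Pairwise (Disjoint on P))
    (hQcard : ∀ i, #(Q i) = k) (hQ : ∀ i j, i < j → ∀ a ∈ Q i, ∀ b ∈ Q j, a < b)
    (hQcover : univ.biUnion Q = univ) {T : Finset ι} {i : ι} (hT : #T = #(Iic i)) :
    ∑ l ∈ T, ∑ a ∈ P l, s a ≤ ∑ l ∈ Iic i, ∑ a ∈ Q l, s a := by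
  have hQdisj := pairwise_disjoint_of_forall_lt hQ
  rw [← sum_biUnion (hPdisj.set_pairwise _), ← sum_biUnion (hQdisj.set_pairwise _)]
  refine hs.sum_le_sum_of_isLowerSet ?_ ?_
  · simp [card_biUnion (hPdisj.set_pairwise _), card_biUnion (hQdisj.set_pairwise _), hPcard,
      hQcard, hT]
  · intro a b hba ha
    obtain ⟨j, hj, haj⟩ := mem_biUnion.1 ha
    obtain ⟨l, -, hbl⟩ := mem_biUnion.1 (hQcover ▸ mem_univ b)
    refine mem_biUnion.2 ⟨l, mem_Iic.2 (le_of_not_gt fun hil => ?_), hbl⟩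
    exact hba.not_gt (hQ j l ((mem_Iic.1 hj).trans_lt hil) a haj b hbl)

end Partition

theorem Antitone.sum_sq_sum_le_of_forall_lt {α R : Type*} [Fintype α] [LinearOrder α] [CommRing R]
    [LinearOrder R] [IsStrictOrderedRing R] {m k : ℕ} {s : α → R} {P Q : Fin m → Finset α}
    (hs : Antitone s) (hPcard : ∀ i, #(P i) = k) (hPdisj : Pairwise (Disjoint on P))
    (hPcover : univ.biUnion P = univ) (hQcard : ∀ i, #(Q i) = k)
    (hQ : ∀ i j, i < j → ∀ a ∈ Q i, ∀ b ∈ Q j, a < b) (hQcover : univ.biUnion Q = univ) :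
    ∑ i, (∑ a ∈ P i, s a) ^ 2 ≤ ∑ i, (∑ a ∈ Q i, s a) ^ 2 := by
  set G : Fin m → R := fun i => ∑ a ∈ P i, s a
  set σ := Tuple.sort (OrderDual.toDual ∘ G)
  have hGσ : Antitone (G ∘ σ) :=
    monotone_toDual_comp_iff.1 (Tuple.monotone_sort (OrderDual.toDual ∘ G))
  have hprefix (i : Fin m) : ∑ j ∈ Iic i, G (σ j) ≤ ∑ j ∈ Iic i, ∑ a ∈ Q j, s a :=
    (sum_map _ σ.toEmbedding G).symm.trans_le
      (hs.sum_sum_le_sum_sum_Iic hPcard hPdisj hQcard hQ hQcover (by simp))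
  have htotal : ∑ i, G (σ i) = ∑ i, ∑ a ∈ Q i, s a := by
    rw [Equiv.sum_comp σ G, sum_sum_eq_sum_of_biUnion_eq_univ hPdisj hPcover,
      sum_sum_eq_sum_of_biUnion_eq_univ (pairwise_disjoint_of_forall_lt hQ) hQcover]
  calc ∑ i, G i ^ 2 = ∑ i, G (σ i) ^ 2 := (Equiv.sum_comp σ (G · ^ 2)).symm
    _ ≤ ∑ i, (∑ a ∈ Q i, s a) ^ 2 :=
      Fin.sum_sq_le_sum_sq_of_majorized hGσ (hs.antitone_sum_of_forall_lt hQcard hQ) hprefix htotal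

def homophilousPartition (n k : ℕ) {m : ℕ} (i : Fin m) : Finset (Fin n) :=
  {j : Fin n | i.val * k ≤ j.val ∧ j.val < (i.val + 1) * k}

theorem card_homophilousPartition {n m k : ℕ} (h : m * k ≤ n) (i : Fin m) :
    #(homophilousPartition n k i) = k := by
  have hlt : ∀ j ∈ Ico (i * k) ((i + 1) * k), j < n := fun j hj =>
    (mem_Ico.1 hj).2.trans_le ((Nat.mul_le_mul_right k i.isLt).trans h)
  have : homophilousPartition n k i = (Ico (i * k) ((i + 1) * k)).attachFin hlt := by
    ext j; simp [homophilousPartition]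
  rw [this, card_attachFin, Nat.card_Ico, add_mul, one_mul, add_tsub_cancel_left]

theorem homophilousPartition_lt {n m k : ℕ} (i j : Fin m) (hij : i < j) :
    ∀ a ∈ homophilousPartition n k i, ∀ b ∈ homophilousPartition n k j, a < b := by
  intro a ha b hb
  simp only [homophilousPartition, mem_filter, mem_univ, true_and] at ha hb
  have : (i.val + 1) * k ≤ j.val * k := Nat.mul_le_mul_right k hij
  exact Fin.lt_def.2 (by omega)

theorem biUnion_homophilousPartition {n m k : ℕ} (h : n ≤ m * k) :
    univ.biUnion (homophilousPartition n k (m := m)) = univ := by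
  refine eq_univ_of_forall fun a => mem_biUnion.2 ?_
  have hk : 0 < k := Nat.pos_of_mul_pos_left (a.pos.trans_le h)
  refine ⟨⟨a / k, (Nat.div_lt_iff_lt_mul hk).2 (a.isLt.trans_le h)⟩, mem_univ _, ?_⟩
  simp only [homophilousPartition, mem_filter, mem_univ, true_and]
  exact ⟨Nat.div_mul_le_self a k, (Nat.div_lt_iff_lt_mul hk).1 (Nat.lt_succ_self _)⟩

theorem homophilous_optimal_AoA_general (n m k : ℕ) (hnk : n = m * k)
    (s : Fin n → ℝ) (hsorted : Antitone s)
    (P : Fin m → Finset (Fin n)) (hcard : ∀ i, (P i).card = k)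
    (hdisj : ∀ i j, i ≠ j → Disjoint (P i) (P j))
    (hcover : Finset.univ.biUnion P = Finset.univ) :
    ∑ i : Fin m, (∑ j ∈ P i, s j) ^ 2 ≤
      ∑ i : Fin m,
        (∑ j ∈ Finset.univ.filter
            (fun j : Fin n => i.val * k ≤ j.val ∧ j.val < (i.val + 1) * k), s j) ^ 2 :=
  hsorted.sum_sq_sum_le_of_forall_lt hcard hdisj hcover (card_homophilousPartition hnk.ge)
    homophilousPartition_lt (biUnion_homophilousPartition hnk.le)

theorem homophilous_optimal_AoA (n m k : ℕ) (hnk : n = m * k) (hk : 0 < k)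
    (s : Fin n → ℝ) (hs : ∀ i, 0 < s i) (hsorted : Antitone s)
    (P : Fin m → Finset (Fin n)) (hcard : ∀ i, (P i).card = k)
    (hdisj : ∀ i j, i ≠ j → Disjoint (P i) (P j))
    (hcover : Finset.univ.biUnion P = Finset.univ) :
    ∑ i : Fin m, (∑ j ∈ P i, s j) ^ 2 ≤
      ∑ i : Fin m,
        (∑ j ∈ Finset.univ.filter
            (fun j : Fin n => i.val * k ≤ j.val ∧ j.val < (i.val + 1) * k), s j) ^ 2 :=
  homophilous_optimal_AoA_general n m k hnk s hsorted P hcard hdisj hcover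
end

section
/- In the greedy analysis for MoA: let S_p and S_q be the final total scores of two groups p, q with group size k, built from items in nonincreasing value order, such that at some point when q received its k'-th item, group p had k'' items with ∑_{i≤k''} s_{p,i} ≥ ∑_{j≤k'-1} s_{q,j} and s_{q,ℓ} ≤ s_{p,k''} for ℓ = k', and s_{q,ℓ} ≤ s_{p,k} for all ℓ > k'. Then S_q ≤ 2 S_p. -/
/-! Split `S_q` at the `k'`-th item. The first `k' - 1` items of `q` are covered by the first `k''`
items of `p`, hence by `S_p`. The remaining items of `q` are `s_{q,k'} ≤ s_{p,k''}` followed by at most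
`k - 1` items each `≤ s_{p,k}`, while `S_p` contains `s_{p,k''}` together with `k - 1` further items
each `≥ s_{p,k}`; so they are covered by `S_p` once more. -/

open Finset

theorem Finset.add_card_sub_one_nsmul_le_sum {ι M : Type*} [AddCommMonoid M] [PartialOrder M]
    [IsOrderedAddMonoid M] {s : Finset ι} {f : ι → M} {c : M} {j : ι} (hj : j ∈ s)
    (hc : ∀ i ∈ s, c ≤ f i) : f j + (#s - 1) • c ≤ ∑ i ∈ s, f i := by
  classical
  rw [← add_sum_erase s f hj, ← card_erase_of_mem hj]
  exact add_le_add_right (card_nsmul_le_sum _ f c fun i hi => hc i (mem_of_mem_erase hi)) _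

theorem greedy_moa_two_groups_general (k k' k'' : ℕ) (sp sq : ℕ → ℝ)
    (hk' : 2 ≤ k') (hk'k : k' ≤ k) (hk''k : k'' < k)
    (hpnn : ∀ i, 0 ≤ sp i)
    (h1 : ∑ i ∈ Finset.range k'', sp i ≥ ∑ j ∈ Finset.range (k' - 1), sq j)
    (h2 : sq (k' - 1) ≤ sp (k'' - 1))
    (h3 : ∀ ℓ, k' ≤ ℓ → ℓ < k → sq ℓ ≤ sp (k - 1))
    (h4 : ∀ ℓ, ℓ < k → sp ℓ ≥ sp (k - 1)) :
    ∑ j ∈ Finset.range k, sq j ≤ 2 * ∑ i ∈ Finset.range k, sp i := by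
  obtain ⟨m, rfl⟩ : ∃ m, k' = m + 1 := ⟨k' - 1, by omega⟩
  simp only [Nat.add_sub_cancel] at h1 h2
  have hhead : ∑ j ∈ range m, sq j ≤ ∑ i ∈ range k, sp i :=
    h1.trans <| sum_le_sum_of_subset_of_nonneg (range_subset_range.2 hk''k.le) fun i _ _ => hpnn i
  have htail : ∑ j ∈ Ico (m + 1) k, sq j ≤ (k - 1) • sp (k - 1) := by
    refine (sum_le_card_nsmul _ _ _ fun ℓ hℓ => h3 ℓ (mem_Ico.1 hℓ).1 (mem_Ico.1 hℓ).2).trans ?_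
    rw [Nat.card_Ico]
    exact nsmul_le_nsmul_left (hpnn _) (by omega)
  have hrest : sp (k'' - 1) + (k - 1) • sp (k - 1) ≤ ∑ i ∈ range k, sp i := by
    simpa using add_card_sub_one_nsmul_le_sum (s := range k) (mem_range.2 (by omega : k'' - 1 < k))
      fun i hi => h4 i (mem_range.1 hi)
  rw [← sum_range_add_sum_Ico sq hk'k, sum_range_succ]
  linarith

theorem greedy_moa_two_groups (k k' k'' : ℕ) (sp sq : ℕ → ℝ)
    (hk' : 2 ≤ k') (hk'k : k' ≤ k) (hk'' : 1 ≤ k'') (hk''k : k'' < k)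
    (hpmono : ∀ a b : ℕ, a ≤ b → sp b ≤ sp a) (hpnn : ∀ i, 0 ≤ sp i)
    (hqmono : ∀ a b : ℕ, a ≤ b → sq b ≤ sq a) (hqnn : ∀ i, 0 ≤ sq i)
    (h1 : ∑ i ∈ Finset.range k'', sp i ≥ ∑ j ∈ Finset.range (k' - 1), sq j)
    (h2 : sq (k' - 1) ≤ sp (k'' - 1))
    (h3 : ∀ ℓ, k' ≤ ℓ → ℓ < k → sq ℓ ≤ sp (k - 1))
    (h4 : ∀ ℓ, ℓ < k → sp ℓ ≥ sp (k - 1)) :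
    ∑ j ∈ Finset.range k, sq j ≤ 2 * ∑ i ∈ Finset.range k, sp i :=
  greedy_moa_two_groups_general k k' k'' sp sq hk' hk'k hk''k hpnn h1 h2 h3 h4
end
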